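/- arXiv:1610.01964 — 2 statements merged into one kernel-verified Lean document; each statement's English description precedes it below -/
import Mathlib

section
/- Let $K = \mathbb{F}_q(t)$ and let $\phi = F/G \in K(x)$ have degree $d \ge 2$. Suppose the system of linear equations $E_i(\phi) = r_i$ (for $0 \le i \le 6$) in the six unknowns $(a,b,c,e,f,g)$, obtained by requiring that the coefficients of $x^{2d}, x^{2d-1}, \ldots, x^{2d-6}$ of the polynomial $P(x) = [GF_2 - FG_2](ex^2+fx+g) - FG_1 + GF_1 - aF^2 - bFG - cG^2$ all vanish, has no solution in $K^6$. Then for every separable algebraic element $\beta$ over $K$ such that both $\beta$ and $\phi(\beta)$ satisfy a generalized Riccati equation (i.e. $\beta' = a\beta^2 + b\beta + c$ and $\phi(\beta)' = e\phi(\beta)^2 + f\phi(\beta) + g$ for some $a,b,c,e,f,g \in K$), one has $[K(\beta):K] \le 2d$. -/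
set_option synthInstance.maxHeartbeats 400000

open Polynomial

/-- Apply a derivation to the coefficients of a polynomial. -/
noncomputable def coeffDeriv {K : Type*} [Field K] (D : K → K) (F : K[X]) : K[X] :=
  F.sum fun i a => Polynomial.C (D a) * Polynomial.X ^ i

/-- The obstruction polynomial
`P = (G·F₂ - F·G₂)(e x² + f x + g) - F·G₁ + G·F₁ - a F² - b F G - c G²`. -/
noncomputable def obstructionPoly {K : Type*} [Field K] (D : K → K) (F G : K[X])
    (a b c e f g : K) : K[X] :=
  (G * derivative F - F * derivative G) *
      (Polynomial.C e * X ^ 2 + Polynomial.C f * X + Polynomial.C g)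
    - F * coeffDeriv D G + G * coeffDeriv D F
    - Polynomial.C a * F ^ 2 - Polynomial.C b * (F * G) - Polynomial.C c * G ^ 2

section Aux

variable {K : Type*} [Field K]

lemma coeffDeriv_zero' (D : K → K) : coeffDeriv D 0 = 0 := Polynomial.sum_zero_index _

lemma coeffDeriv_monomial' (D : K → K) (h0 : D 0 = 0) (n : ℕ) (a : K) :
    coeffDeriv D (monomial n a) = C (D a) * X ^ n := by
  unfold coeffDeriv; rw [Polynomial.sum_monomial_index]; simp [h0]

lemma coeffDeriv_add' (D : K → K) (h0 : D 0 = 0)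
    (hadd : ∀ x y, D (x + y) = D x + D y) (p q : K[X]) :
    coeffDeriv D (p + q) = coeffDeriv D p + coeffDeriv D q := by
  unfold coeffDeriv; rw [Polynomial.sum_add_index] <;> simp [h0, hadd, add_mul]

lemma natDegree_coeffDeriv_le' (D : K → K) (F : K[X]) :
    (coeffDeriv D F).natDegree ≤ F.natDegree := by
  unfold coeffDeriv Polynomial.sum
  apply Polynomial.natDegree_sum_le_of_forall_le
  intro i hi
  refine le_trans (natDegree_C_mul_le _ _) ?_
  simpa using Polynomial.le_natDegree_of_mem_supp i hi

lemma wronskian_natDegree_bound' (F G : K[X]) (d : ℕ) (hd : 2 ≤ d)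
    (hF : F.natDegree ≤ d) (hG : G.natDegree ≤ d) :
    (G * derivative F - F * derivative G).natDegree + 2 ≤ 2 * d := by
  have hdF := Polynomial.natDegree_derivative_le F
  have hdG := Polynomial.natDegree_derivative_le G
  have bnd : ∀ p q : K[X], p.natDegree ≤ d → q.natDegree ≤ d →
      p.natDegree ≠ q.natDegree →
      (q * derivative p - p * derivative q).natDegree + 2 ≤ 2 * d := by
    intro p q hp hq hne
    have hne' : p.natDegree ≠ q.natDegree := hne
    have h1 : (q * derivative p).natDegree ≤ q.natDegree + (derivative p).natDegree :=
      natDegree_mul_le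
    have h2 : (p * derivative q).natDegree ≤ p.natDegree + (derivative q).natDegree :=
      natDegree_mul_le
    have h3 := Polynomial.natDegree_derivative_le p
    have h4 := Polynomial.natDegree_derivative_le q
    have := natDegree_sub_le (q * derivative p) (p * derivative q)
    omega
  rcases eq_or_ne F.natDegree G.natDegree with heq | hne
  · rcases Nat.eq_zero_or_pos F.natDegree with h0 | hpos
    · have := natDegree_sub_le (G * derivative F) (F * derivative G)
      have h1 : (G * derivative F).natDegree ≤ G.natDegree + (derivative F).natDegree :=
        natDegree_mul_le
      have h2 : (F * derivative G).natDegree ≤ F.natDegree + (derivative G).natDegree :=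
        natDegree_mul_le
      omega
    · have hF0 : F ≠ 0 := fun h => by simp [h] at hpos
      have hG0 : G ≠ 0 := fun h => by rw [h, natDegree_zero] at heq; omega
      set c := F.leadingCoeff / G.leadingCoeff with hc
      have hlG : G.leadingCoeff ≠ 0 := leadingCoeff_ne_zero.mpr hG0
      have hlF : F.leadingCoeff ≠ 0 := leadingCoeff_ne_zero.mpr hF0
      have hc0 : c ≠ 0 := div_ne_zero hlF hlG
      set F' := F - C c * G with hF'
      have hWeq : G * derivative F - F * derivative G
          = G * derivative F' - F' * derivative G := by
        rw [hF', derivative_sub, derivative_C_mul]; ring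
      have hF'deg : F'.natDegree + 1 ≤ F.natDegree := by
        rcases eq_or_ne F' 0 with h | h
        · rw [h, natDegree_zero]; omega
        · have hdlt : F'.degree < F.degree := by
            apply degree_sub_lt _ hF0
            · rw [leadingCoeff_mul, leadingCoeff_C, hc, div_mul_cancel₀ _ hlG]
            · rw [degree_C_mul hc0, degree_eq_natDegree hF0, degree_eq_natDegree hG0, heq]
          have := Polynomial.natDegree_lt_natDegree h hdlt
          omega
      have h1 : (G * derivative F').natDegree ≤ G.natDegree + (derivative F').natDegree :=
        natDegree_mul_le
      have h2 : (F' * derivative G).natDegree ≤ F'.natDegree + (derivative G).natDegree :=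
        natDegree_mul_le
      have h3 := Polynomial.natDegree_derivative_le F'
      rw [hWeq]
      have := natDegree_sub_le (G * derivative F') (F' * derivative G)
      omega
  · exact bnd F G hF hG hne

lemma deriv_aeval' (D : K → K) (h0 : D 0 = 0)
    (hadd : ∀ x y, D (x + y) = D x + D y)
    (L : Type*) [Field L] [Algebra K L] (D' : Derivation ℤ L L)
    (hcomp : ∀ x : K, D' (algebraMap K L x) = algebraMap K L (D x))
    (β : L) (F : K[X]) :
    D' (aeval β F) = aeval β (derivative F) * D' β + aeval β (coeffDeriv D F) := by
  induction F using Polynomial.induction_on' with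
  | add p q hp hq =>
    rw [map_add, map_add, derivative_add, map_add, coeffDeriv_add' D h0 hadd, map_add, hp, hq]
    ring
  | monomial n a =>
    rw [coeffDeriv_monomial' D h0, aeval_monomial, derivative_monomial, aeval_monomial]
    have : D' (algebraMap K L a * β ^ n)
        = algebraMap K L a * D' (β ^ n) + β ^ n * D' (algebraMap K L a) := by
      rw [D'.leibniz]; simp [smul_eq_mul]
    rw [this, hcomp, Derivation.leibniz_pow]
    simp only [smul_eq_mul, nsmul_eq_mul, map_mul, map_natCast, map_C, aeval_C, map_pow, aeval_X]
    ring

end Aux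

/-- Suppose the linear system in `(a,b,c,e,f,g)` asking that the coefficients of
`x^{2d}, …, x^{2d-6}` of the obstruction polynomial all vanish has no solution.
Then any separable algebraic `β` such that both `β` and `φ(β) = F(β)/G(β)` satisfy a
generalized Riccati equation has degree `[K(β):K] ≤ 2d`. -/
theorem riccati_degree_bound {Fq : Type*} [Field Fq] [Fintype Fq]
    (D : Derivation Fq (RatFunc Fq) (RatFunc Fq)) (hDX : D RatFunc.X = 1)
    (L : Type*) [Field L] [Algebra (RatFunc Fq) L]
    (D' : Derivation ℤ L L)
    (hcomp : ∀ x : RatFunc Fq, D' (algebraMap (RatFunc Fq) L x) = algebraMap (RatFunc Fq) L (D x))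
    (F G : (RatFunc Fq)[X]) (d : ℕ) (hd : 2 ≤ d)
    (hdeg : max F.natDegree G.natDegree = d)
    (hinc : ¬ ∃ a b c e f g : RatFunc Fq, ∀ i ≤ 6,
      (obstructionPoly (fun x => D x) F G a b c e f g).coeff (2 * d - i) = 0)
    (β : L) (hint : IsIntegral (RatFunc Fq) β) (hsep : (minpoly (RatFunc Fq) β).Separable)
    (hric : ∃ a b c e f g : RatFunc Fq,
      D' β = algebraMap (RatFunc Fq) L a * β ^ 2 + algebraMap (RatFunc Fq) L b * β +
          algebraMap (RatFunc Fq) L c ∧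
      D' ((aeval β) F / (aeval β) G) =
        algebraMap (RatFunc Fq) L e * ((aeval β) F / (aeval β) G) ^ 2 +
          algebraMap (RatFunc Fq) L f * ((aeval β) F / (aeval β) G) +
          algebraMap (RatFunc Fq) L g) :
    Module.finrank (RatFunc Fq) ↥(IntermediateField.adjoin (RatFunc Fq) {β}) ≤ 2 * d := by
  classical
  obtain ⟨a, b, c, e, f, g, hric1, hric2⟩ := hric
  have h0 : (fun x : RatFunc Fq => D x) 0 = 0 := by simp
  have hadd : ∀ x y : RatFunc Fq, (fun x : RatFunc Fq => D x) (x + y) =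
      (fun x : RatFunc Fq => D x) x + (fun x : RatFunc Fq => D x) y := by intro x y; simp
  -- G is nonzero
  have hG0 : G ≠ 0 := by
    intro h
    apply hinc
    refine ⟨0, 0, 0, 0, 0, 0, fun i _ => ?_⟩
    simp [obstructionPoly, h, coeffDeriv_zero']
  have hF : F.natDegree ≤ d := hdeg ▸ le_max_left _ _
  have hG : G.natDegree ≤ d := hdeg ▸ le_max_right _ _
  rw [IntermediateField.adjoin.finrank hint]
  by_cases hv : (aeval β) G = 0
  · -- β is a root of G
    have hdvd := minpoly.dvd (RatFunc Fq) β hv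
    have := Polynomial.natDegree_le_of_dvd hdvd hG0
    omega
  · set P := obstructionPoly (fun x : RatFunc Fq => D x) F G e f g a b c with hP
    have hP0 : P ≠ 0 := by
      intro h
      exact hinc ⟨e, f, g, a, b, c, fun i _ => by rw [← hP, h, coeff_zero]⟩
    -- degree bound on P
    have hW := wronskian_natDegree_bound' F G d hd hF hG
    have hq : (C a * X ^ 2 + C b * X + C c : (RatFunc Fq)[X]).natDegree ≤ 2 := by
      compute_degree
    have ht1 : ((G * derivative F - F * derivative G) *
        (C a * X ^ 2 + C b * X + C c) : (RatFunc Fq)[X]).natDegree ≤ 2 * d :=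
      le_trans natDegree_mul_le (by omega)
    have hc1 := natDegree_coeffDeriv_le' (fun x : RatFunc Fq => D x) F
    have hc2 := natDegree_coeffDeriv_le' (fun x : RatFunc Fq => D x) G
    have ht2 : (F * coeffDeriv (fun x : RatFunc Fq => D x) G).natDegree ≤ 2 * d :=
      le_trans natDegree_mul_le (by omega)
    have ht3 : (G * coeffDeriv (fun x : RatFunc Fq => D x) F).natDegree ≤ 2 * d :=
      le_trans natDegree_mul_le (by omega)
    have ht4 : (C e * F ^ 2 : (RatFunc Fq)[X]).natDegree ≤ 2 * d := by
      refine le_trans (natDegree_C_mul_le _ _) ?_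
      rw [natDegree_pow]; omega
    have ht5 : (C f * (F * G) : (RatFunc Fq)[X]).natDegree ≤ 2 * d := by
      refine le_trans (natDegree_C_mul_le _ _) (le_trans natDegree_mul_le (by omega))
    have ht6 : (C g * G ^ 2 : (RatFunc Fq)[X]).natDegree ≤ 2 * d := by
      refine le_trans (natDegree_C_mul_le _ _) ?_
      rw [natDegree_pow]; omega
    have hdegP : P.natDegree ≤ 2 * d := by
      rw [hP]
      unfold obstructionPoly
      refine le_trans (natDegree_sub_le _ _) (max_le ?_ ht6)
      refine le_trans (natDegree_sub_le _ _) (max_le ?_ ht5)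
      refine le_trans (natDegree_sub_le _ _) (max_le ?_ ht4)
      refine le_trans (natDegree_add_le _ _) (max_le ?_ ht3)
      exact le_trans (natDegree_sub_le _ _) (max_le ht1 ht2)
    -- β is a root of P
    have hu := deriv_aeval' (fun x : RatFunc Fq => D x) h0 hadd L D' hcomp β F
    have hvd := deriv_aeval' (fun x : RatFunc Fq => D x) h0 hadd L D' hcomp β G
    set u := aeval β F with hu'
    set v := aeval β G with hv'
    have h1 : v * D' u - u * D' v = algebraMap (RatFunc Fq) L e * u ^ 2 +
        algebraMap (RatFunc Fq) L f * (u * v) + algebraMap (RatFunc Fq) L g * v ^ 2 := by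
      have hDu : D' (u / v * v) = u / v * D' v + v * D' (u / v) := by
        rw [D'.leibniz]; simp [smul_eq_mul]
      calc v * D' u - u * D' v = v * D' (u / v * v) - u * D' v := by
            rw [div_mul_cancel₀ u hv]
        _ = v * (u / v * D' v + v * D' (u / v)) - u * D' v := by rw [hDu]
        _ = v ^ 2 * D' (u / v) := by field_simp; ring
        _ = v ^ 2 * (algebraMap (RatFunc Fq) L e * (u / v) ^ 2 + algebraMap (RatFunc Fq) L f * (u / v) +
              algebraMap (RatFunc Fq) L g) := by rw [hric2]
        _ = _ := by field_simp
    have key : aeval β P = 0 := by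
      rw [hP]
      unfold obstructionPoly
      simp only [map_sub, map_add, map_mul, map_pow, aeval_C, aeval_X, ← hu', ← hv']
      linear_combination (-(v * aeval β (derivative F) - u * aeval β (derivative G))) * hric1
        - v * hu + u * hvd + h1
    have hdvd := minpoly.dvd (RatFunc Fq) β key
    have := Polynomial.natDegree_le_of_dvd hdvd hP0
    omega
end

section
/- Let $K = \mathbb{F}_q(t)$ of characteristic at least 5, let $E: y^2 = x^3 + Ax + B$ be an elliptic curve over $K$ with $2AB' - 3BA' \neq 0$ (where $'$ is $d/dt$), and let $\phi(x) = (x^4 - 2Ax^2 - 8Bx + A^2)/(4x^3 + 4Ax + 4B)$ be the Lattès map of multiplication by 2. If $\beta \in K^{\mathrm{sep}}$ is such that $\beta$, $\phi(\beta)$, and $\phi^2(\beta)$ each satisfy a generalized Riccati equation over $K$ (of the form $u' = au^2 + bu + c$ with $a,b,c \in K$), then $[K(\beta):K] \le 32$. -/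
set_option maxHeartbeats 1600000

open Polynomial IntermediateField


set_option synthInstance.maxHeartbeats 400000

/-- The degree-4 Lattès map of `E : y² = x³ + Ax + B` (multiplication by 2 on
`x`-coordinates), as a function (junk value at poles). -/
noncomputable def lattesMap {L : Type*} [Field L] (A B : L) (x : L) : L :=
  (x ^ 4 - 2 * A * x ^ 2 - 8 * B * x + A ^ 2) / (4 * x ^ 3 + 4 * A * x + 4 * B)

/-- Core computation: if `u` has minimal polynomial of degree `> 8` over `K`, `u` and
`v = φ(u)` both satisfy Riccati equations, then the Riccati coefficients of `u²` and `v²`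
are forced. -/
theorem lattes_forced {K L : Type*} [Field K] [Field L] [Algebra K L]
    (D' : Derivation ℤ L L) (A B Ap Bp a b c p q r : K)
    (hA : D' (algebraMap K L A) = algebraMap K L Ap)
    (hB : D' (algebraMap K L B) = algebraMap K L Bp)
    (u v : L)
    (hu : D' u = algebraMap K L a * u ^ 2 + algebraMap K L b * u + algebraMap K L c)
    (hv : D' v = algebraMap K L p * v ^ 2 + algebraMap K L q * v + algebraMap K L r)
    (hvm : v * (4 * u ^ 3 + 4 * algebraMap K L A * u + 4 * algebraMap K L B)
        = u ^ 4 - 2 * algebraMap K L A * u ^ 2 - 8 * algebraMap K L B * u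
            + algebraMap K L A ^ 2)
    (hdeg : 8 < (minpoly K u).natDegree) :
    a * (768 * (4 * A ^ 3 + 27 * B ^ 2) ^ 2)
        = (1728 * B * Ap - 1152 * A * Bp) * (4 * A ^ 3 + 27 * B ^ 2) ∧
      p * (768 * (4 * A ^ 3 + 27 * B ^ 2) ^ 2)
        = 4 * ((1728 * B * Ap - 1152 * A * Bp) * (4 * A ^ 3 + 27 * B ^ 2)) := by
  have h4 : D' (4 : L) = 0 := by simpa using D'.map_natCast 4
  have h2' : D' (2 : L) = 0 := by simpa using D'.map_natCast 2
  have h8 : D' (8 : L) = 0 := by simpa using D'.map_natCast 8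
  -- the differentiated relation
  have hR : (algebraMap K L p * v ^ 2 + algebraMap K L q * v + algebraMap K L r)
        * (4 * u ^ 3 + 4 * algebraMap K L A * u + 4 * algebraMap K L B)
      + v * ((12 * u ^ 2 + 4 * algebraMap K L A)
            * (algebraMap K L a * u ^ 2 + algebraMap K L b * u + algebraMap K L c)
          + 4 * algebraMap K L Ap * u + 4 * algebraMap K L Bp)
      = (4 * u ^ 3 - 4 * algebraMap K L A * u - 8 * algebraMap K L B)
            * (algebraMap K L a * u ^ 2 + algebraMap K L b * u + algebraMap K L c)
        + (-(2 * algebraMap K L Ap * u ^ 2) - 8 * algebraMap K L Bp * u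
            + 2 * algebraMap K L A * algebraMap K L Ap) := by
    have h1 : D' (v * (4 * u ^ 3 + 4 * algebraMap K L A * u + 4 * algebraMap K L B))
        = D' (u ^ 4 - 2 * algebraMap K L A * u ^ 2 - 8 * algebraMap K L B * u
            + algebraMap K L A ^ 2) := by rw [hvm]
    simp only [Derivation.leibniz, Derivation.leibniz_pow, map_add, map_sub, smul_eq_mul,
      nsmul_eq_mul, h4, h2', h8, hA, hB, hu, hv] at h1
    push_cast at h1
    linear_combination h1
  set Pu : Polynomial K := Polynomial.C (-(16*B^2*r) - 32*B^2*c + 8*A*B*Ap - 4*A^2*Bp - 4*A^2*B*q - 4*A^3*c - A^4*p)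
      + Polynomial.C (32*B^2*q - 32*B^2*b - 32*A*B*r - 16*A*B*c + 4*A^2*Ap + 16*A^2*B*p - 4*A^3*q - 4*A^3*b) * Polynomial.X ^ 1
      + Polynomial.C (24*B*Ap - 64*B^2*p - 32*B^2*a - 24*A*Bp + 40*A*B*q - 16*A*B*b - 16*A^2*r - 20*A^2*c + 4*A^3*p - 4*A^3*a) * Polynomial.X ^ 2
      + Polynomial.C (-(32*B*r) + 80*B*c + 8*A*Ap - 32*A*B*p - 16*A*B*a + 4*A^2*q - 20*A^2*b) * Polynomial.X ^ 3
      + Polynomial.C (-(36*Bp) + 28*B*q + 80*B*b - 32*A*r + 20*A*c - 6*A^2*p - 20*A^2*a) * Polynomial.X ^ 4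
      + Polynomial.C (-(12*Ap) + 16*B*p + 80*B*a + 4*A*q + 20*A*b) * Polynomial.X ^ 5
      + Polynomial.C (-(16*r) + 4*c + 4*A*p + 20*A*a) * Polynomial.X ^ 6
      + Polynomial.C (-(4*q) + 4*b) * Polynomial.X ^ 7
      + Polynomial.C (-p + 4*a) * Polynomial.X ^ 8 with hPu_def
  have haev : Polynomial.aeval u Pu = 0 := by
    simp only [hPu_def, map_add, map_mul, map_pow, map_sub, map_neg, map_ofNat,
      Polynomial.aeval_C, Polynomial.aeval_X, map_one]
    linear_combination (-(4 * u ^ 3 + 4 * algebraMap K L A * u + 4 * algebraMap K L B)) * hR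
      + (algebraMap K L p * (v * (4 * u ^ 3 + 4 * algebraMap K L A * u + 4 * algebraMap K L B) + (u ^ 4 - 2 * algebraMap K L A * u ^ 2 - 8 * algebraMap K L B * u + algebraMap K L A ^ 2)) + algebraMap K L q * (4 * u ^ 3 + 4 * algebraMap K L A * u + 4 * algebraMap K L B)
      + ((12 * u ^ 2 + 4 * algebraMap K L A)
            * (algebraMap K L a * u ^ 2 + algebraMap K L b * u + algebraMap K L c)
          + 4 * algebraMap K L Ap * u + 4 * algebraMap K L Bp)) * hvm
  have hPne : Pu = 0 := by
    by_contra hne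
    have hdle : (minpoly K u).degree ≤ Pu.degree := minpoly.degree_le_of_ne_zero K u hne haev
    have h8' : Pu.natDegree ≤ 8 := by
      rw [hPu_def]
      compute_degree
    have : (minpoly K u).natDegree ≤ Pu.natDegree := Polynomial.natDegree_le_natDegree hdle
    omega
  rw [hPu_def] at hPne
  have e0 := congrArg (fun g => Polynomial.coeff g 0) hPne
  have e4 := congrArg (fun g => Polynomial.coeff g 4) hPne
  have e5 := congrArg (fun g => Polynomial.coeff g 5) hPne
  have e6 := congrArg (fun g => Polynomial.coeff g 6) hPne
  have e7 := congrArg (fun g => Polynomial.coeff g 7) hPne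
  have e8 := congrArg (fun g => Polynomial.coeff g 8) hPne
  simp only [Polynomial.coeff_add, Polynomial.coeff_C_mul, Polynomial.coeff_X_pow,
    Polynomial.coeff_C, Polynomial.coeff_zero] at e0 e4 e5 e6 e7 e8
  norm_num at e0 e4 e5 e6 e7 e8
  constructor
  · linear_combination (-(288*A^2)) * e0 + (-(864*A*B^2) - 96*A^4) * e4
      + (3888*B^3 + 384*A^3*B) * e5 + (2016*A^2*B^2 + 192*A^5) * e6
      + (-(2160*A*B^3)) * e7 + (62208*B^4 + 19392*A^3*B^2 + 1632*A^6) * e8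
  · linear_combination (-(1152*A^2)) * e0 + (-(3456*A*B^2) - 384*A^4) * e4
      + (15552*B^3 + 1536*A^3*B) * e5 + (8064*A^2*B^2 + 768*A^5) * e6
      + (-(8640*A*B^3)) * e7
      + (248832*B^4 + 77568*A^3*B^2 + 6528*A^6 - 768*(4*A^3+27*B^2)^2) * e8



lemma cubic_bound {K L : Type*} [Field K] [Field L] [Algebra K L] (h4 : (4:K) ≠ 0)
    (A B : K) (x : L)
    (hx : 4 * x ^ 3 + 4 * algebraMap K L A * x + 4 * algebraMap K L B = 0) :
    (minpoly K x).natDegree ≤ 3 := by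
  have h4L : (4 : L) ≠ 0 := by
    rw [show (4 : L) = algebraMap K L 4 from by rw [map_ofNat]]
    exact (_root_.map_ne_zero (algebraMap K L)).mpr h4
  have key : x ^ 3 + algebraMap K L A * x + algebraMap K L B = 0 := by
    have h := mul_eq_zero.mp (show (4:L) * (x ^ 3 + algebraMap K L A * x + algebraMap K L B) = 0
      from by linear_combination hx)
    tauto
  have haev : Polynomial.aeval x (X ^ 3 + C A * X + C B) = 0 := by
    simp only [map_add, map_mul, map_pow, aeval_C, aeval_X]
    linear_combination key
  have hne : (X ^ 3 + C A * X + C B : K[X]) ≠ 0 := by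
    intro h
    have := congrArg (fun g => Polynomial.coeff g 3) h
    simp [coeff_C, coeff_X] at this
  have := Polynomial.natDegree_le_natDegree (minpoly.degree_le_of_ne_zero K x hne haev)
  refine le_trans this ?_
  compute_degree

set_option maxHeartbeats 1000000 in
set_option synthInstance.maxHeartbeats 400000 in
lemma quartic_tower {K L : Type*} [Field K] [Field L] [Algebra K L]
    (A B : K) (u g : L) (hu : IsIntegral K u) (hg : IsIntegral K g)
    (hrel : g * (4 * u ^ 3 + 4 * algebraMap K L A * u + 4 * algebraMap K L B)
        = u ^ 4 - 2 * algebraMap K L A * u ^ 2 - 8 * algebraMap K L B * u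
            + algebraMap K L A ^ 2) :
    Module.finrank K (IntermediateField.adjoin K {u})
      ≤ 4 * Module.finrank K (IntermediateField.adjoin K {g}) := by
  haveI : FiniteDimensional K K⟮g⟯ := IntermediateField.adjoin.finiteDimensional hg
  set gF : K⟮g⟯ := IntermediateField.AdjoinSimple.gen K g with hgF
  set pF : Polynomial K⟮g⟯ :=
    X ^ 4 - C (4 * gF) * X ^ 3 - C (2 * algebraMap K K⟮g⟯ A) * X ^ 2
      - C (8 * algebraMap K K⟮g⟯ B + 4 * algebraMap K K⟮g⟯ A * gF) * X
      + C (algebraMap K K⟮g⟯ A ^ 2 - 4 * algebraMap K K⟮g⟯ B * gF) with hpF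
  have hmapA : algebraMap K⟮g⟯ L (algebraMap K K⟮g⟯ A) = algebraMap K L A := by
    rw [← IsScalarTower.algebraMap_apply]
  have hmapB : algebraMap K⟮g⟯ L (algebraMap K K⟮g⟯ B) = algebraMap K L B := by
    rw [← IsScalarTower.algebraMap_apply]
  have haev : Polynomial.aeval u pF = 0 := by
    simp only [hpF, hgF, map_add, map_sub, map_mul, map_pow, aeval_C, aeval_X, map_ofNat,
      hmapA, hmapB, IntermediateField.AdjoinSimple.algebraMap_gen]
    linear_combination -hrel
  have hmonic : pF.Monic := by
    rw [hpF]
    monicity!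
  have huF : IsIntegral K⟮g⟯ u := ⟨pF, hmonic, haev⟩
  haveI : FiniteDimensional K⟮g⟯ K⟮g⟯⟮u⟯ := IntermediateField.adjoin.finiteDimensional huF
  have hd4 : Module.finrank K⟮g⟯ K⟮g⟯⟮u⟯ ≤ 4 := by
    rw [IntermediateField.adjoin.finrank huF]
    have h1 := Polynomial.natDegree_le_natDegree
      (minpoly.degree_le_of_ne_zero K⟮g⟯ u hmonic.ne_zero haev)
    refine le_trans h1 ?_
    rw [hpF]
    compute_degree
  haveI hfdE : FiniteDimensional K K⟮g⟯⟮u⟯ := FiniteDimensional.trans K K⟮g⟯ K⟮g⟯⟮u⟯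
  have hle : IntermediateField.adjoin K {u} ≤ (K⟮g⟯⟮u⟯).restrictScalars K := by
    rw [IntermediateField.adjoin_le_iff]
    intro x hx
    rcases hx with rfl
    simp only [SetLike.mem_coe, IntermediateField.mem_restrictScalars]
    exact IntermediateField.mem_adjoin_simple_self K⟮g⟯ x
  have hsub : ∀ y : L, y ∈ IntermediateField.adjoin K ({u} : Set L) → y ∈ K⟮g⟯⟮u⟯ := by
    intro y hy
    exact (IntermediateField.mem_restrictScalars K).mp (hle hy)
  let incl : IntermediateField.adjoin K ({u} : Set L) →ₗ[K] K⟮g⟯⟮u⟯ :=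
    { toFun := fun x => ⟨(x : L), hsub x x.2⟩
      map_add' := fun x y => rfl
      map_smul' := fun k x => rfl }
  have hinj : Function.Injective incl := by
    intro x y hxy
    have hval := congrArg (fun z : K⟮ g⟯⟮ u⟯ => (z : L)) hxy
    exact Subtype.ext hval
  have hmono : Module.finrank K (IntermediateField.adjoin K ({u} : Set L))
      ≤ Module.finrank K K⟮g⟯⟮u⟯ :=
    LinearMap.finrank_le_finrank_of_injective hinj
  have heq : Module.finrank K K⟮g⟯ * Module.finrank K⟮g⟯ K⟮g⟯⟮u⟯
      = Module.finrank K K⟮g⟯⟮u⟯ := Module.finrank_mul_finrank K K⟮g⟯ K⟮g⟯⟮u⟯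
  have h2 : Module.finrank K K⟮g⟯⟮u⟯ ≤ 4 * Module.finrank K K⟮g⟯ := by
    rw [← heq]
    calc Module.finrank K K⟮g⟯ * Module.finrank K⟮g⟯ K⟮g⟯⟮u⟯
        ≤ Module.finrank K K⟮g⟯ * 4 := Nat.mul_le_mul_left _ hd4
      _ = 4 * Module.finrank K K⟮g⟯ := Nat.mul_comm _ _
  exact le_trans hmono h2


/-- Over `K = 𝔽_q(t)` of characteristic at least 5, for an elliptic curve
`E : y² = x³ + Ax + B` with `2AB' - 3BA' ≠ 0`, if a separable algebraic `β` is such that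
`β`, `φ(β)` and `φ²(β)` all satisfy a generalized Riccati equation over `K`, where `φ` is
the Lattès map of multiplication by 2, then `[K(β):K] ≤ 32`. -/
theorem lattes_riccati_degree_bound {Fq : Type*} [Field Fq] [Fintype Fq]
    (hp : 5 ≤ ringChar Fq)
    (D : Derivation Fq (RatFunc Fq) (RatFunc Fq)) (hDX : D RatFunc.X = 1)
    (L : Type*) [Field L] [Algebra (RatFunc Fq) L]
    (D' : Derivation ℤ L L)
    (hcomp : ∀ x : RatFunc Fq, D' (algebraMap (RatFunc Fq) L x) = algebraMap (RatFunc Fq) L (D x))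
    (A B : RatFunc Fq) (hE : 4 * A ^ 3 + 27 * B ^ 2 ≠ 0)
    (hW : 2 * A * D B - 3 * B * D A ≠ 0)
    (β : L) (hint : IsIntegral (RatFunc Fq) β) (hsep : (minpoly (RatFunc Fq) β).Separable)
    (hric : ∀ u ∈ ({β,
        lattesMap (algebraMap (RatFunc Fq) L A) (algebraMap (RatFunc Fq) L B) β,
        lattesMap (algebraMap (RatFunc Fq) L A) (algebraMap (RatFunc Fq) L B)
          (lattesMap (algebraMap (RatFunc Fq) L A) (algebraMap (RatFunc Fq) L B) β)} :
          Set L),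
      ∃ a b c : RatFunc Fq,
        D' u = algebraMap (RatFunc Fq) L a * u ^ 2 + algebraMap (RatFunc Fq) L b * u +
          algebraMap (RatFunc Fq) L c) :
    Module.finrank (RatFunc Fq) ↥(IntermediateField.adjoin (RatFunc Fq) {β}) ≤ 32 := by
  haveI hchar : CharP (RatFunc Fq) (ringChar Fq) :=
    charP_of_injective_algebraMap' (A := RatFunc Fq) Fq (ringChar Fq)
  have hprime : (ringChar Fq).Prime := CharP.char_is_prime Fq (ringChar Fq)
  have h3 : (3 : RatFunc Fq) ≠ 0 := by
    rw [show (3 : RatFunc Fq) = ((3 : ℕ) : RatFunc Fq) by norm_num, Ne,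
      CharP.cast_eq_zero_iff (RatFunc Fq) (ringChar Fq)]
    intro hdvd
    have := Nat.le_of_dvd (by norm_num) hdvd
    omega
  have h4 : (4 : RatFunc Fq) ≠ 0 := by
    rw [show (4 : RatFunc Fq) = ((4 : ℕ) : RatFunc Fq) by norm_num, Ne,
      CharP.cast_eq_zero_iff (RatFunc Fq) (ringChar Fq)]
    intro hdvd
    have := Nat.le_of_dvd (by norm_num) hdvd
    omega
  have h576 : (576 : RatFunc Fq) ≠ 0 := by
    rw [show (576 : RatFunc Fq) = ((576 : ℕ) : RatFunc Fq) by norm_num, Ne,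
      CharP.cast_eq_zero_iff (RatFunc Fq) (ringChar Fq)]
    intro hdvd
    rw [show (576 : ℕ) = 2 ^ 6 * 3 ^ 2 by norm_num] at hdvd
    rcases (Nat.Prime.dvd_mul hprime).mp hdvd with h | h
    · have h2 := Nat.Prime.dvd_of_dvd_pow hprime h
      have := Nat.le_of_dvd (by norm_num) h2
      omega
    · have h2 := Nat.Prime.dvd_of_dvd_pow hprime h
      have := Nat.le_of_dvd (by norm_num) h2
      omega
  by_contra hcon
  push_neg at hcon
  have hfinβ : Module.finrank (RatFunc Fq) (IntermediateField.adjoin (RatFunc Fq) ({β} : Set L))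
      = (minpoly (RatFunc Fq) β).natDegree := IntermediateField.adjoin.finrank hint
  have hdegβ : 32 < (minpoly (RatFunc Fq) β).natDegree := by rw [← hfinβ]; exact hcon
  have hmβ : 4 * β ^ 3 + 4 * algebraMap (RatFunc Fq) L A * β
      + 4 * algebraMap (RatFunc Fq) L B ≠ 0 := by
    intro h0
    have := cubic_bound h4 A B β h0
    omega
  set γ := lattesMap (algebraMap (RatFunc Fq) L A) (algebraMap (RatFunc Fq) L B) β with hγ
  have hγdiv : γ = (β ^ 4 - 2 * algebraMap (RatFunc Fq) L A * β ^ 2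
      - 8 * algebraMap (RatFunc Fq) L B * β + algebraMap (RatFunc Fq) L A ^ 2)
      / (4 * β ^ 3 + 4 * algebraMap (RatFunc Fq) L A * β + 4 * algebraMap (RatFunc Fq) L B) := hγ
  have hγm : γ * (4 * β ^ 3 + 4 * algebraMap (RatFunc Fq) L A * β
        + 4 * algebraMap (RatFunc Fq) L B)
      = β ^ 4 - 2 * algebraMap (RatFunc Fq) L A * β ^ 2
        - 8 * algebraMap (RatFunc Fq) L B * β + algebraMap (RatFunc Fq) L A ^ 2 := by
    rw [hγdiv]
    exact div_mul_cancel₀ _ hmβ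
  -- γ is integral over K
  haveI : FiniteDimensional (RatFunc Fq) (IntermediateField.adjoin (RatFunc Fq) ({β} : Set L)) :=
    IntermediateField.adjoin.finiteDimensional hint
  have hβS : β ∈ IntermediateField.adjoin (RatFunc Fq) ({β} : Set L) :=
    IntermediateField.mem_adjoin_simple_self (RatFunc Fq) β
  have hγmem : γ ∈ IntermediateField.adjoin (RatFunc Fq) ({β} : Set L) := by
    set S := IntermediateField.adjoin (RatFunc Fq) ({β} : Set L) with hS
    have hAm : algebraMap (RatFunc Fq) L A ∈ S := S.algebraMap_mem A
    have hBm : algebraMap (RatFunc Fq) L B ∈ S := S.algebraMap_mem B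
    have h2m : (2 : L) ∈ S := by
      rw [show (2 : L) = algebraMap (RatFunc Fq) L 2 from (map_ofNat _ 2).symm]
      exact S.algebraMap_mem 2
    have h4m : (4 : L) ∈ S := by
      rw [show (4 : L) = algebraMap (RatFunc Fq) L 4 from (map_ofNat _ 4).symm]
      exact S.algebraMap_mem 4
    have h8m : (8 : L) ∈ S := by
      rw [show (8 : L) = algebraMap (RatFunc Fq) L 8 from (map_ofNat _ 8).symm]
      exact S.algebraMap_mem 8
    have hnS : β ^ 4 - 2 * algebraMap (RatFunc Fq) L A * β ^ 2
        - 8 * algebraMap (RatFunc Fq) L B * β + algebraMap (RatFunc Fq) L A ^ 2 ∈ S := by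
      refine add_mem (sub_mem (sub_mem (pow_mem hβS 4) ?_) ?_) (pow_mem hAm 2)
      · exact mul_mem (mul_mem h2m hAm) (pow_mem hβS 2)
      · exact mul_mem (mul_mem h8m hBm) hβS
    have hmS : 4 * β ^ 3 + 4 * algebraMap (RatFunc Fq) L A * β
        + 4 * algebraMap (RatFunc Fq) L B ∈ S := by
      refine add_mem (add_mem ?_ ?_) ?_
      · exact mul_mem h4m (pow_mem hβS 3)
      · exact mul_mem (mul_mem h4m hAm) hβS
      · exact mul_mem h4m hBm
    rw [hγdiv]
    exact div_mem hnS hmS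
  have hγint : IsIntegral (RatFunc Fq) γ := by
    have h1 : IsIntegral (RatFunc Fq)
        (⟨γ, hγmem⟩ : IntermediateField.adjoin (RatFunc Fq) ({β} : Set L)) :=
      IsIntegral.of_finite _ _
    exact IsIntegral.map (IntermediateField.adjoin (RatFunc Fq) ({β} : Set L)).val h1
  have hγdeg : 8 < (minpoly (RatFunc Fq) γ).natDegree := by
    by_contra hle8
    push_neg at hle8
    have h1 : Module.finrank (RatFunc Fq)
        (IntermediateField.adjoin (RatFunc Fq) ({γ} : Set L)) ≤ 8 := by
      rw [IntermediateField.adjoin.finrank hγint]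
      exact hle8
    have h2 := quartic_tower A B β γ hint hγint hγm
    omega
  have hmγ : 4 * γ ^ 3 + 4 * algebraMap (RatFunc Fq) L A * γ
      + 4 * algebraMap (RatFunc Fq) L B ≠ 0 := by
    intro h0
    have := cubic_bound h4 A B γ h0
    omega
  set δ := lattesMap (algebraMap (RatFunc Fq) L A) (algebraMap (RatFunc Fq) L B) γ with hδ
  have hδdiv : δ = (γ ^ 4 - 2 * algebraMap (RatFunc Fq) L A * γ ^ 2
      - 8 * algebraMap (RatFunc Fq) L B * γ + algebraMap (RatFunc Fq) L A ^ 2)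
      / (4 * γ ^ 3 + 4 * algebraMap (RatFunc Fq) L A * γ + 4 * algebraMap (RatFunc Fq) L B) := hδ
  have hδm : δ * (4 * γ ^ 3 + 4 * algebraMap (RatFunc Fq) L A * γ
        + 4 * algebraMap (RatFunc Fq) L B)
      = γ ^ 4 - 2 * algebraMap (RatFunc Fq) L A * γ ^ 2
        - 8 * algebraMap (RatFunc Fq) L B * γ + algebraMap (RatFunc Fq) L A ^ 2 := by
    rw [hδdiv]
    exact div_mul_cancel₀ _ hmγ
  obtain ⟨a, b, c, hu⟩ := hric β (Set.mem_insert _ _)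
  obtain ⟨p, q, r, hv⟩ := hric γ (Set.mem_insert_of_mem _ (Set.mem_insert _ _))
  obtain ⟨s, t, w, hw⟩ := hric δ (Set.mem_insert_of_mem _ (Set.mem_insert_of_mem _ rfl))
  have H1 := lattes_forced D' A B (D A) (D B) a b c p q r (hcomp A) (hcomp B) β γ
    hu hv hγm (by omega)
  have H2 := lattes_forced D' A B (D A) (D B) p q r s t w (hcomp A) (hcomp B) γ δ
    hv hw hδm hγdeg
  obtain ⟨-, h1p⟩ := H1
  obtain ⟨h2p, -⟩ := H2
  have hXδ : (1728 * B * D A - 1152 * A * D B) * (4 * A ^ 3 + 27 * B ^ 2) * 3 = 0 := by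
    linear_combination h2p - h1p
  have hX : 1728 * B * D A - 1152 * A * D B = 0 := by
    by_contra hY
    exact (mul_ne_zero (mul_ne_zero hY hE) h3) hXδ
  apply hW
  have h5 : (576 : RatFunc Fq) * (2 * A * D B - 3 * B * D A) = 0 := by
    linear_combination -hX
  rcases mul_eq_zero.mp h5 with h | h
  · exact absurd h h576
  · exact h
end
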